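/- Let (X_t)_{t≥0} be a supermartingale with respect to its natural filtration (F_t)_{t≥0}, and suppose that for every t ≥ 1 the difference X_t − X_{t−1}, conditioned on F_{t−1}, satisfies the one-sided (D,s)-Bernstein condition. Then for any h > 0 and T ∈ ℕ, Pr[∃ t ≤ T : X_t − X_0 ≥ h] ≤ exp(−(h²/2)/(T·s + h·D/3)). -/

import Mathlib

open MeasureTheory ProbabilityTheory
open scoped ENNReal

noncomputable section

def CondOneSidedBernstein {Ω : Type*} [MeasurableSpace Ω] (μ : Measure Ω)
    (m : MeasurableSpace Ω) (W : Ω → ℝ) (D s : ℝ) : Prop :=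
  ∀ l : ℝ, 0 ≤ l → l * D < 3 → ∀ A : Set Ω, MeasurableSet[m] A →
    (∫⁻ ω in A, ENNReal.ofReal (Real.exp (l * W ω)) ∂μ) ≤
      ENNReal.ofReal (Real.exp (l ^ 2 * s / 2 / (1 - l * D / 3))) * μ A

section Aux
variable {Ω : Type} {m0 : MeasurableSpace Ω} {μ : Measure Ω} [IsProbabilityMeasure μ]

/-- The exponential process is a supermartingale. -/
lemma bernstein_supermartingale (X : ℕ → Ω → ℝ) (hX : ∀ t, StronglyMeasurable (X t))
    (D s : ℝ) (hs : 0 ≤ s)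
    (hBern : ∀ t : ℕ, 1 ≤ t →
      CondOneSidedBernstein μ (Filtration.natural X hX (t - 1))
        (fun ω => X t ω - X (t - 1) ω) D s)
    (l : ℝ) (hl : 0 ≤ l) (hlD : l * D < 3) :
    Supermartingale
      (fun (t : ℕ) ω => Real.exp (l * (X t ω - X 0 ω) - t * (l ^ 2 * s / 2 / (1 - l * D / 3))))
      (Filtration.natural X hX) μ := by
  set F := Filtration.natural X hX with hF
  set ψ : ℝ := l ^ 2 * s / 2 / (1 - l * D / 3) with hψdef
  have hden : 0 < 1 - l * D / 3 := by linarith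
  have hψ : 0 ≤ ψ := div_nonneg (by positivity) hden.le
  set Y : ℕ → Ω → ℝ := fun t ω => Real.exp (l * (X t ω - X 0 ω) - t * ψ) with hY
  -- adaptedness
  have hXadp : StronglyAdapted F X := Filtration.stronglyAdapted_natural hX
  have hYsm : ∀ t, StronglyMeasurable[F t] (Y t) := by
    intro t
    have h0 : StronglyMeasurable[F t] (X 0) := (hXadp 0).mono (F.mono (Nat.zero_le t))
    exact (Real.continuous_exp.comp_stronglyMeasurable
      ((((hXadp t).sub h0).const_mul l).sub stronglyMeasurable_const))
  -- key one-step set-lintegral inequality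
  have hkey : ∀ t : ℕ, ∀ A : Set Ω, MeasurableSet[F t] A →
      ∫⁻ ω in A, ENNReal.ofReal (Y (t + 1) ω) ∂μ ≤ ∫⁻ ω in A, ENNReal.ofReal (Y t ω) ∂μ := by
    intro t A hA
    set W : Ω → ℝ := fun ω => X (t + 1) ω - X t ω with hW
    have hB := hBern (t + 1) (by omega)
    simp only [Nat.add_sub_cancel] at hB
    have hBl := hB l hl hlD
    have hWm : Measurable fun ω => ENNReal.ofReal (Real.exp (l * W ω)) := by
      have : Measurable W := (hX (t + 1)).measurable.sub (hX t).measurable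
      exact ENNReal.measurable_ofReal.comp (Real.measurable_exp.comp (this.const_mul l))
    set ν : Measure Ω := μ.withDensity fun ω => ENNReal.ofReal (Real.exp (l * W ω)) with hν
    have htrim : ν.trim (F.le t) ≤ (ENNReal.ofReal (Real.exp ψ) • μ).trim (F.le t) := by
      refine Measure.le_iff.2 fun B hB' => ?_
      rw [trim_measurableSet_eq _ hB', trim_measurableSet_eq _ hB',
        withDensity_apply _ ((F.le t) B hB'), Measure.smul_apply, smul_eq_mul]
      exact hBl B hB'
    set G : Ω → ℝ≥0∞ := A.indicator fun ω => ENNReal.ofReal (Y t ω) with hG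
    have hGm : Measurable[F t] G :=
      (ENNReal.measurable_ofReal.comp (hYsm t).measurable).indicator hA
    have hGm0 : Measurable G := hGm.mono (F.le t) le_rfl
    have hpt : ∀ ω, ENNReal.ofReal (Y (t + 1) ω) =
        ENNReal.ofReal (Real.exp (-ψ)) *
          (ENNReal.ofReal (Y t ω) * ENNReal.ofReal (Real.exp (l * W ω))) := by
      intro ω
      rw [← ENNReal.ofReal_mul (Real.exp_nonneg _), ← ENNReal.ofReal_mul (Real.exp_nonneg _),
        ← Real.exp_add, ← Real.exp_add]
      congr 1
      simp only [hY, hW]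
      push_cast
      ring
    have hZm : Measurable fun ω => ENNReal.ofReal (Y t ω) :=
      ENNReal.measurable_ofReal.comp ((hYsm t).mono (F.le t)).measurable
    have step1 : ∫⁻ ω in A, ENNReal.ofReal (Y (t + 1) ω) ∂μ =
        ENNReal.ofReal (Real.exp (-ψ)) *
          ∫⁻ ω, G ω * ENNReal.ofReal (Real.exp (l * W ω)) ∂μ := by
      calc ∫⁻ ω in A, ENNReal.ofReal (Y (t + 1) ω) ∂μ
          = ∫⁻ ω in A, ENNReal.ofReal (Real.exp (-ψ)) *
              (ENNReal.ofReal (Y t ω) * ENNReal.ofReal (Real.exp (l * W ω))) ∂μ :=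
            lintegral_congr fun ω => hpt ω
        _ = ENNReal.ofReal (Real.exp (-ψ)) *
              ∫⁻ ω in A, ENNReal.ofReal (Y t ω) * ENNReal.ofReal (Real.exp (l * W ω)) ∂μ :=
            lintegral_const_mul _ (hZm.mul hWm)
        _ = ENNReal.ofReal (Real.exp (-ψ)) *
              ∫⁻ ω, A.indicator (fun ω =>
                ENNReal.ofReal (Y t ω) * ENNReal.ofReal (Real.exp (l * W ω))) ω ∂μ := by
            rw [lintegral_indicator ((F.le t) A hA)]
        _ = ENNReal.ofReal (Real.exp (-ψ)) *
              ∫⁻ ω, G ω * ENNReal.ofReal (Real.exp (l * W ω)) ∂μ := by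
            congr 1
            refine lintegral_congr fun ω => ?_
            by_cases hω : ω ∈ A
            · simp only [Set.indicator_of_mem hω, hG]
            · simp only [Set.indicator_of_notMem hω, hG, zero_mul]
    have step2 : ∫⁻ ω, G ω * ENNReal.ofReal (Real.exp (l * W ω)) ∂μ ≤
        ENNReal.ofReal (Real.exp ψ) * ∫⁻ ω, G ω ∂μ := by
      have e1 : ∫⁻ ω, G ω * ENNReal.ofReal (Real.exp (l * W ω)) ∂μ = ∫⁻ ω, G ω ∂ν := by
        rw [hν, lintegral_withDensity_eq_lintegral_mul μ hWm hGm0]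
        congr 1; ext ω; exact mul_comm _ _
      rw [e1, ← lintegral_trim (F.le t) hGm]
      calc ∫⁻ ω, G ω ∂(ν.trim (F.le t))
          ≤ ∫⁻ ω, G ω ∂((ENNReal.ofReal (Real.exp ψ) • μ).trim (F.le t)) :=
            lintegral_mono' htrim le_rfl
        _ = ∫⁻ ω, G ω ∂(ENNReal.ofReal (Real.exp ψ) • μ) := lintegral_trim (F.le t) hGm
        _ = ENNReal.ofReal (Real.exp ψ) * ∫⁻ ω, G ω ∂μ := lintegral_smul_measure _ _
    calc ∫⁻ ω in A, ENNReal.ofReal (Y (t + 1) ω) ∂μ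
        ≤ ENNReal.ofReal (Real.exp (-ψ)) * (ENNReal.ofReal (Real.exp ψ) * ∫⁻ ω, G ω ∂μ) := by
          rw [step1]; exact mul_le_mul_right step2 _
      _ = ∫⁻ ω in A, ENNReal.ofReal (Y t ω) ∂μ := by
          rw [← mul_assoc, ← ENNReal.ofReal_mul (Real.exp_nonneg _), ← Real.exp_add,
            neg_add_cancel, Real.exp_zero, ENNReal.ofReal_one, one_mul, hG,
            lintegral_indicator ((F.le t) A hA) _]
  -- total lintegral bound
  have hlint : ∀ t, ∫⁻ ω, ENNReal.ofReal (Y t ω) ∂μ ≤ 1 := by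
    intro t
    induction t with
    | zero =>
      simp only [hY, Nat.cast_zero, zero_mul, sub_self, mul_zero, sub_zero, Real.exp_zero,
        ENNReal.ofReal_one, lintegral_one, measure_univ, le_refl]
    | succ n ih =>
      refine le_trans ?_ ih
      have := hkey n Set.univ MeasurableSet.univ
      simpa [Measure.restrict_univ] using this
  have hint : ∀ t, Integrable (Y t) μ := by
    intro t
    refine ⟨((hYsm t).mono (F.le t)).aestronglyMeasurable, ?_⟩
    rw [hasFiniteIntegral_iff_ofReal (ae_of_all _ fun ω => (Real.exp_pos _).le)]
    exact lt_of_le_of_lt (hlint t) ENNReal.one_lt_top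
  -- set integral (Bochner) inequality
  refine supermartingale_of_setIntegral_succ_le hYsm hint ?_
  intro i A hA
  have hm : MeasurableSet A := (F.le i) A hA
  have e : ∀ u : ℕ, ∫ ω in A, Y u ω ∂μ = (∫⁻ ω in A, ENNReal.ofReal (Y u ω) ∂μ).toReal := by
    intro u
    rw [integral_eq_lintegral_of_nonneg_ae (ae_of_all _ fun ω => (Real.exp_pos _).le)
      (((hYsm u).mono (F.le u)).aestronglyMeasurable.restrict)]
  rw [e, e]
  refine ENNReal.toReal_mono ?_ (hkey i A hA)
  exact ne_of_lt (lt_of_le_of_lt (le_trans (setLIntegral_le_lintegral _ _) (hlint i)) ENNReal.one_lt_top)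

/-- Maximal inequality for a nonnegative supermartingale starting at 1. -/
lemma supermartingale_maximal_aux {F : Filtration ℕ m0} {Y : ℕ → Ω → ℝ}
    (hY : Supermartingale Y F μ) (hpos : ∀ t ω, 0 ≤ Y t ω) (h0 : ∀ ω, Y 0 ω = 1)
    {ε : ℝ} (hε : 0 < ε) (T : ℕ) :
    μ {ω | ∃ t ≤ T, ε ≤ Y t ω} ≤ ENNReal.ofReal (1 / ε) := by
  set A : Set Ω := {ω | ∃ t ≤ T, ε ≤ Y t ω} with hAdef
  have hAm : MeasurableSet A := by
    have : A = ⋃ t ∈ Set.Iic T, {ω | ε ≤ Y t ω} := by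
      ext ω; simp [hAdef]
    rw [this]
    exact MeasurableSet.biUnion (Set.to_countable _) fun t _ =>
      measurableSet_le measurable_const ((hY.stronglyMeasurable t).measurable.le (F.le t))
  set τ : Ω → WithTop ℕ := fun ω => (hittingBtwn Y (Set.Ici ε) 0 T ω : ℕ) with hτdef
  have hτ : IsStoppingTime F τ := hY.stronglyAdapted.adapted.isStoppingTime_hittingBtwn measurableSet_Ici
  have hτle : ∀ ω, τ ω ≤ T := fun ω => WithTop.coe_le_coe.mpr (hittingBtwn_le ω)
  have hSVint : Integrable (stoppedValue Y τ) μ := by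
    have := hY.neg.integrable_stoppedValue hτ hτle
    have h2 : stoppedValue (-Y) τ = -stoppedValue Y τ := rfl
    rw [h2] at this
    simpa using this.neg
  have hSVnn : ∀ ω, 0 ≤ stoppedValue Y τ ω := fun ω => hpos _ ω
  have hconst : ∀ ω ∈ A, ε ≤ stoppedValue Y τ ω := by
    intro ω hω
    obtain ⟨t, ht, hεt⟩ := hω
    exact stoppedValue_hittingBtwn_mem ⟨t, ⟨Nat.zero_le t, ht⟩, hεt⟩
  have key1 : ε * (μ A).toReal ≤ ∫ ω in A, stoppedValue Y τ ω ∂μ :=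
    setIntegral_ge_of_const_le_real hAm (measure_ne_top μ A) hconst hSVint.integrableOn
  have key2 : ∫ ω in A, stoppedValue Y τ ω ∂μ ≤ ∫ ω, stoppedValue Y τ ω ∂μ :=
    setIntegral_le_integral hSVint (ae_of_all _ hSVnn)
  have key3 : ∫ ω, stoppedValue Y τ ω ∂μ ≤ 1 := by
    have hmono := hY.neg.expected_stoppedValue_mono (isStoppingTime_const F 0) hτ
      (fun ω => WithTop.coe_le_coe.mpr (Nat.zero_le _)) hτle
    have h2 : stoppedValue (-Y) (fun _ => ((0 : ℕ) : WithTop ℕ)) = -Y 0 := stoppedValue_const (-Y) 0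
    have h3 : stoppedValue (-Y) τ = -stoppedValue Y τ := rfl
    change ∫ x, (-Y 0) x ∂μ ≤ ∫ x, (-stoppedValue Y τ) x ∂μ at hmono
    simp only [Pi.neg_apply] at hmono
    rw [integral_neg, integral_neg, neg_le_neg_iff] at hmono
    calc ∫ ω, stoppedValue Y τ ω ∂μ ≤ ∫ ω, Y 0 ω ∂μ := hmono
      _ = 1 := by simp [h0]
  have : (μ A).toReal ≤ 1 / ε := by
    rw [le_div_iff₀ hε, mul_comm]
    exact le_trans key1 (le_trans key2 key3)
  rw [← ENNReal.ofReal_toReal (measure_ne_top μ A)]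
  exact ENNReal.ofReal_le_ofReal this

end Aux

/-- **Freedman-type inequality under the one-sided Bernstein condition.**
If `(X_t)` is a supermartingale (w.r.t. its natural filtration) whose increments
`X_t - X_{t-1}` satisfy, conditionally on `F_{t-1}`, the one-sided `(D, s)`-Bernstein
condition, then for any `h > 0` and `T ∈ ℕ`,
`Pr[∃ t ≤ T, X_t - X_0 ≥ h] ≤ exp (-(h²/2) / (T s + h D / 3))`. -/
theorem freedman_inequality_one_sided_bernstein :
    ∀ (Ω : Type) (m0 : MeasurableSpace Ω) (μ : Measure Ω), IsProbabilityMeasure μ →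
    ∀ (X : ℕ → Ω → ℝ) (hX : ∀ t, StronglyMeasurable (X t)) (D s : ℝ),
      0 ≤ D → 0 ≤ s →
      Supermartingale X (Filtration.natural X hX) μ →
      (∀ t : ℕ, 1 ≤ t →
        CondOneSidedBernstein μ (Filtration.natural X hX (t - 1))
          (fun ω => X t ω - X (t - 1) ω) D s) →
      ∀ h : ℝ, 0 < h → ∀ T : ℕ,
        μ {ω | ∃ t ≤ T, h ≤ X t ω - X 0 ω} ≤
          ENNReal.ofReal (Real.exp (-(h ^ 2 / 2) / (T * s + h * D / 3))) := by
  intro Ω m0 μ hprob X hX D s hD hs _hsuper hBern h hh T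
  by_cases hT : T = 0
  · subst hT
    have hempty : {ω : Ω | ∃ t ≤ 0, h ≤ X t ω - X 0 ω} = ∅ := by
      ext ω
      simp only [Set.mem_setOf_eq, Set.mem_empty_iff_false, iff_false, not_exists]
      rintro t ⟨ht, hle⟩
      have : t = 0 := Nat.le_zero.mp ht
      subst this
      simp only [sub_self] at hle
      linarith
    rw [hempty]
    simp
  · set d : ℝ := T * s + h * D / 3 with hd
    have hd0 : 0 ≤ d := by positivity
    rcases eq_or_lt_of_le hd0 with hdz | hdpos
    · rw [show -(h ^ 2 / 2) / d = 0 from by rw [← hdz, div_zero], Real.exp_zero,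
        ENNReal.ofReal_one]
      exact prob_le_one
    · obtain ⟨l, hl0, hlD, hval⟩ : ∃ l : ℝ, 0 ≤ l ∧ l * D < 3 ∧
          l * h - T * (l ^ 2 * s / 2 / (1 - l * D / 3)) = h ^ 2 / 2 / d := by
        by_cases hsz : s = 0
        · have hDpos : 0 < D := by
            by_contra hDneg
            push_neg at hDneg
            have hDz : D = 0 := le_antisymm hDneg hD
            rw [hd, hsz, hDz] at hdpos
            simp at hdpos
          refine ⟨3 / (2 * D), by positivity, ?_, ?_⟩
          · rw [div_mul_eq_mul_div, div_lt_iff₀ (by positivity)]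
            nlinarith
          · subst hsz
            have hdval : d = h * D / 3 := by rw [hd]; ring
            rw [hdval]
            have hz : (3 / (2 * D)) ^ 2 * 0 / 2 / (1 - 3 / (2 * D) * D / 3) = 0 := by
              rw [mul_zero, zero_div, zero_div]
            rw [hz, mul_zero, sub_zero]
            field_simp
        · have hspos : 0 < s := lt_of_le_of_ne hs (Ne.symm hsz)
          have hTpos : 0 < (T : ℝ) := by
            exact_mod_cast Nat.pos_of_ne_zero hT
          have hTs : 0 < (T : ℝ) * s := by positivity
          have hlDden : 0 < 1 - h / d * D / 3 := by
            rw [hd]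
            rw [hd] at hdpos
            rw [div_mul_eq_mul_div, div_div, lt_sub_iff_add_lt, zero_add, div_lt_one (by positivity)]
            nlinarith
          refine ⟨h / d, by positivity, ?_, ?_⟩
          · have := hlDden
            nlinarith
          · have h1 : 1 - h / d * D / 3 = T * s / d := by
              field_simp
              rw [hd]
              ring
            rw [h1]
            field_simp
            ring
      have hsup := bernstein_supermartingale X hX D s hs hBern l hl0 hlD
      have hden : 0 < 1 - l * D / 3 := by linarith
      have hψ : 0 ≤ l ^ 2 * s / 2 / (1 - l * D / 3) := div_nonneg (by positivity) hden.le
      set ψ : ℝ := l ^ 2 * s / 2 / (1 - l * D / 3) with hψdef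
      set ε : ℝ := Real.exp (h ^ 2 / 2 / d) with hε
      have hsub : {ω : Ω | ∃ t ≤ T, h ≤ X t ω - X 0 ω} ⊆
          {ω : Ω | ∃ t ≤ T, ε ≤ Real.exp (l * (X t ω - X 0 ω) - t * ψ)} := by
        rintro ω ⟨t, ht, hle⟩
        refine ⟨t, ht, ?_⟩
        rw [hε, ← hval, Real.exp_le_exp]
        have h1 : l * h ≤ l * (X t ω - X 0 ω) := mul_le_mul_of_nonneg_left hle hl0
        have h2 : (t : ℝ) * ψ ≤ T * ψ := by
          apply mul_le_mul_of_nonneg_right _ hψ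
          exact_mod_cast ht
        linarith
      have hmax := supermartingale_maximal_aux hsup (fun t ω => (Real.exp_pos _).le)
        (fun ω => by simp) (Real.exp_pos (h ^ 2 / 2 / d)) T
      calc μ {ω : Ω | ∃ t ≤ T, h ≤ X t ω - X 0 ω}
          ≤ μ {ω : Ω | ∃ t ≤ T, ε ≤ Real.exp (l * (X t ω - X 0 ω) - t * ψ)} :=
            measure_mono hsub
        _ ≤ ENNReal.ofReal (1 / ε) := hmax
        _ = ENNReal.ofReal (Real.exp (-(h ^ 2 / 2) / d)) := by
            rw [hε, one_div, ← Real.exp_neg]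
            congr 1
            rw [neg_div]
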